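/- Let G = (V, E, ends) be a multigraph with n = |V| vertices. Then the set of extreme points of the score vector polytope P_G is finite and has at most ∑_{i=0}^{n} n!/i! elements (this number equals ⌊e·n!⌋). -/

import Mathlib

open Finset

/-- The degree `κ_S` of a subset `S` of vertices of a multigraph `(V, E, ends)`. -/
def multigraphKappa {V E : Type*} [Fintype E] [DecidableEq V]
    (ends : E → Sym2 V) (S : Finset V) : ℕ :=
  (Finset.univ.filter fun e => ∃ v ∈ S, v ∈ ends e).card

/-- The score vector polytope of a multigraph. -/
def scorePolytope {V E : Type*} [Fintype E] [DecidableEq V]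
    (ends : E → Sym2 V) : Set (V → ℝ) :=
  {x | (∀ v : V, 0 ≤ x v) ∧
    ∀ S : Finset V, ∑ v ∈ S, x v ≤ (multigraphKappa ends S : ℝ)}


/-!
Since `κ` is monotone and submodular, the sets `S` that are tight at a point `x` of `P_G`
(`∑_{v∈S} x_v = κ_S`) are closed under union and intersection. At an extreme point `x` no
direction `d ≠ 0` supported on `supp x` can have `∑_{v∈S} d_v = 0` for all tight `S`, since
then `x ± εd ∈ P_G` for small `ε`. With `d = e_v` this makes `supp x` tight, and with
`d = e_u - e_w` it shows that every tight `T ⊊ supp x` grows by a single vertex to a tight set.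
Hence `supp x` is reached from `∅` by a chain of tight sets adding one vertex at a time, and `x`
is the greedy vector of that ordering: `x_v` is the increase of `κ` when `v` is added. So the
extreme points are indexed by injective sequences of length at most `n`, and there are
`∑_k n!/(n-k)!` of those.
-/

open Finset Filter Topology

section Tight

variable {V E : Type*} [Fintype E] [DecidableEq V] (ends : E → Sym2 V)

lemma multigraphKappa_empty : multigraphKappa ends (∅ : Finset V) = 0 := by
  simp [multigraphKappa]

lemma multigraphKappa_mono {S T : Finset V} (h : S ⊆ T) :
    multigraphKappa ends S ≤ multigraphKappa ends T :=
  card_le_card fun e => by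
    simp only [mem_filter, mem_univ, true_and]
    exact fun ⟨v, hv, hve⟩ => ⟨v, h hv, hve⟩

lemma multigraphKappa_union_add_inter_le (S T : Finset V) :
    multigraphKappa ends (S ∪ T) + multigraphKappa ends (S ∩ T) ≤
      multigraphKappa ends S + multigraphKappa ends T := by
  classical
  set A := univ.filter fun e => ∃ v ∈ S, v ∈ ends e
  set B := univ.filter fun e => ∃ v ∈ T, v ∈ ends e
  have hunion : univ.filter (fun e => ∃ v ∈ S ∪ T, v ∈ ends e) = A ∪ B := by
    ext e
    simp only [A, B, mem_filter, mem_univ, true_and, mem_union, or_and_right, exists_or]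
  have hinter : univ.filter (fun e => ∃ v ∈ S ∩ T, v ∈ ends e) ⊆ A ∩ B := by
    intro e
    simp only [A, B, mem_filter, mem_univ, true_and, mem_inter]
    exact fun ⟨v, ⟨hvS, hvT⟩, hve⟩ => ⟨⟨v, hvS, hve⟩, v, hvT, hve⟩
  calc multigraphKappa ends (S ∪ T) + multigraphKappa ends (S ∩ T)
      ≤ #(A ∪ B) + #(A ∩ B) := by
        unfold multigraphKappa
        rw [hunion]
        exact Nat.add_le_add_left (card_le_card hinter) _
    _ = multigraphKappa ends S + multigraphKappa ends T := card_union_add_card_inter A B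

def IsTight (x : V → ℝ) (S : Finset V) : Prop :=
  ∑ v ∈ S, x v = multigraphKappa ends S

variable {ends} {x : V → ℝ}

lemma isTight_empty : IsTight ends x ∅ := by
  simp [IsTight, multigraphKappa_empty]

lemma IsTight.union_and_inter (hx : x ∈ scorePolytope ends) {S T : Finset V}
    (hS : IsTight ends x S) (hT : IsTight ends x T) :
    IsTight ends x (S ∪ T) ∧ IsTight ends x (S ∩ T) := by
  have hsub : (multigraphKappa ends (S ∪ T) : ℝ) + multigraphKappa ends (S ∩ T) ≤
      multigraphKappa ends S + multigraphKappa ends T := by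
    exact_mod_cast multigraphKappa_union_add_inter_le ends S T
  have hsum := sum_union_inter (s₁ := S) (s₂ := T) (f := x)
  have hunion := hx.2 (S ∪ T)
  have hinter := hx.2 (S ∩ T)
  unfold IsTight at *
  constructor <;> linarith

lemma IsTight.of_subset (hx : x ∈ scorePolytope ends) {S T : Finset V} (hT : IsTight ends x T)
    (hST : S ⊆ T) (hzero : ∀ v ∈ T, v ∉ S → x v = 0) : IsTight ends x S := by
  have hsum : ∑ v ∈ S, x v = ∑ v ∈ T, x v := sum_subset hST hzero
  have hmono : (multigraphKappa ends S : ℝ) ≤ multigraphKappa ends T := by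
    exact_mod_cast multigraphKappa_mono ends hST
  exact le_antisymm (hx.2 S) (by rw [hsum, hT]; exact hmono)

end Tight

section Extreme

variable {V E : Type*} [Fintype V] [Fintype E] [DecidableEq V] {ends : E → Sym2 V} {x : V → ℝ}

lemma eventually_add_smul_mem_scorePolytope (hx : x ∈ scorePolytope ends) {d : V → ℝ}
    (hsupp : ∀ v, x v = 0 → d v = 0)
    (htight : ∀ S, IsTight ends x S → ∑ v ∈ S, d v = 0) :
    ∀ᶠ t in 𝓝 (0 : ℝ), x + t • d ∈ scorePolytope ends := by
  have hline (a b : ℝ) : Tendsto (fun t : ℝ => a + t * b) (𝓝 0) (𝓝 a) := by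
    simpa using ((continuous_id.mul continuous_const).const_add a).tendsto' 0 a (by simp)
  have hsum (t : ℝ) (S : Finset V) :
      ∑ v ∈ S, (x + t • d) v = ∑ v ∈ S, x v + t * ∑ v ∈ S, d v := by
    simp only [Pi.add_apply, Pi.smul_apply, smul_eq_mul, sum_add_distrib, mul_sum]
  refine (eventually_all.2 fun v => ?_).and (eventually_all.2 fun S => ?_)
  · rcases (hx.1 v).eq_or_lt with hv | hv
    · exact .of_forall fun t => by simp [← hv, hsupp v hv.symm]
    · filter_upwards [(hline (x v) (d v)).eventually_const_lt hv] with t ht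
      exact ht.le
  · by_cases hS : IsTight ends x S
    · exact .of_forall fun t => by rw [hsum, htight S hS, mul_zero, add_zero]; exact hS.le
    · filter_upwards [(hline _ _).eventually_lt_const (lt_of_le_of_ne (hx.2 S) hS)] with t ht
      exact (hsum t S).trans_le ht.le

lemma notMem_extremePoints_of_forall_isTight (hx : x ∈ scorePolytope ends) {d : V → ℝ}
    (hd : d ≠ 0) (hsupp : ∀ v, x v = 0 → d v = 0)
    (htight : ∀ S, IsTight ends x S → ∑ v ∈ S, d v = 0) :
    x ∉ Set.extremePoints ℝ (scorePolytope ends) := by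
  intro hext
  obtain ⟨δ, hδ, hball⟩ :=
    Metric.eventually_nhds_iff.1 (eventually_add_smul_mem_scorePolytope hx hsupp htight)
  have hε : 0 < δ / 2 := half_pos hδ
  have hdist : dist (δ / 2) 0 < δ ∧ dist (-(δ / 2)) 0 < δ := by
    simp only [Real.dist_eq, sub_zero, abs_neg, abs_of_pos hε]
    constructor <;> linarith
  have hmid : x ∈ openSegment ℝ (x + (δ / 2) • d) (x + (-(δ / 2)) • d) :=
    ⟨1 / 2, 1 / 2, by norm_num, by norm_num, by norm_num, by module⟩
  have heq : x + (δ / 2) • d = x := hext.2 (hball hdist.1) (hball hdist.2) hmid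
  exact hd ((smul_eq_zero.1 (add_eq_left.1 heq)).resolve_left hε.ne')

lemma exists_isTight_mem (hx : x ∈ Set.extremePoints ℝ (scorePolytope ends)) {v : V}
    (hv : x v ≠ 0) : ∃ S, IsTight ends x S ∧ v ∈ S := by
  by_contra! h
  refine notMem_extremePoints_of_forall_isTight hx.1 (d := Pi.single v 1) ?_ ?_ ?_ hx
  · exact Pi.single_ne_zero_iff.2 one_ne_zero
  · intro w hw
    exact Pi.single_eq_of_ne (by rintro rfl; exact hv hw) _
  · intro S hS
    rw [sum_pi_single', if_neg (h S hS)]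

lemma eq_of_forall_isTight_mem_iff (hx : x ∈ Set.extremePoints ℝ (scorePolytope ends))
    {u w : V} (hu : x u ≠ 0) (hw : x w ≠ 0)
    (h : ∀ S, IsTight ends x S → (u ∈ S ↔ w ∈ S)) :
    u = w := by
  by_contra huw
  refine notMem_extremePoints_of_forall_isTight hx.1 (d := Pi.single u 1 - Pi.single w 1)
    ?_ ?_ ?_ hx
  · intro hd
    simpa [huw] using congrFun hd u
  · intro v hv
    have hvu : v ≠ u := fun h => hu (h ▸ hv)
    have hvw : v ≠ w := fun h => hw (h ▸ hv)
    simp [hvu, hvw]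
  · intro S hS
    simp [sum_sub_distrib, sum_pi_single', h S hS]

end Extreme

section Chain

variable {V E : Type*} [Fintype V] [Fintype E] [DecidableEq V] {ends : E → Sym2 V} {x : V → ℝ}

lemma isTight_support (hx : x ∈ Set.extremePoints ℝ (scorePolytope ends)) :
    IsTight ends x (univ.filter (x · ≠ 0)) := by
  classical
  set M := (univ.filter (IsTight ends x)).sup id
  have hM : IsTight ends x M :=
    sup_induction isTight_empty (fun _ hS _ hT => (hS.union_and_inter hx.1 hT).1)
      (fun S hS => (mem_filter.1 hS).2)
  refine hM.of_subset hx.1 (fun v hv => ?_) (fun v _ hv => by simpa using hv)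
  obtain ⟨S, hS, hvS⟩ := exists_isTight_mem hx (mem_filter.1 hv).2
  exact le_sup (f := id) (mem_filter.2 ⟨mem_univ S, hS⟩) hvS

lemma exists_isTight_insert (hx : x ∈ Set.extremePoints ℝ (scorePolytope ends))
    {T : Finset V} (hT : IsTight ends x T) (hTX : T ⊂ univ.filter (x · ≠ 0)) :
    ∃ u, x u ≠ 0 ∧ u ∉ T ∧ IsTight ends x (insert u T) := by
  obtain ⟨T', ⟨hT', hTT', hT'X⟩, hmin⟩ := exists_minimal_of_wellFoundedLT
    (fun S => IsTight ends x S ∧ T ⊂ S ∧ S ⊆ univ.filter (x · ≠ 0))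
    ⟨_, isTight_support hx, hTX, subset_rfl⟩
  have hsupp {v} (hv : v ∈ T') : x v ≠ 0 := (mem_filter.1 (hT'X hv)).2
  -- a tight `S` containing `a` but not `b` would make `S ∩ T' ∪ T` a tight set
  -- strictly between `T` and `T'`
  have hsep {a b} (ha : a ∈ T') (haT : a ∉ T) (hb : b ∈ T') (hbT : b ∉ T) (S : Finset V)
      (hS : IsTight ends x S) (haS : a ∈ S) : b ∈ S := by
    by_contra hbS
    have hS' : IsTight ends x (S ∩ T' ∪ T) :=
      ((hS.union_and_inter hx.1 hT').2.union_and_inter hx.1 hT).1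
    have hsub : S ∩ T' ∪ T ⊆ T' := union_subset inter_subset_right hTT'.subset
    have hlt : T ⊂ S ∩ T' ∪ T := (ssubset_iff_of_subset subset_union_right).2
      ⟨a, mem_union_left _ (mem_inter.2 ⟨haS, ha⟩), haT⟩
    have hbmem := hmin ⟨hS', hlt, hsub.trans hT'X⟩ hsub hb
    simp [hbS, hbT] at hbmem
  obtain ⟨u, huT', huT⟩ := exists_of_ssubset hTT'
  refine ⟨u, hsupp huT', huT, ?_⟩
  suffices insert u T = T' by rwa [this]
  refine (insert_subset huT' hTT'.subset).antisymm fun w hw => ?_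
  by_cases hwT : w ∈ T
  · exact mem_insert_of_mem hwT
  · rw [eq_of_forall_isTight_mem_iff hx (hsupp hw) (hsupp huT')
      fun S hS => ⟨hsep hw hwT huT' huT S hS, hsep huT' huT hw hwT S hS⟩]
    exact mem_insert_self u T

end Chain

section Greedy

variable {V E : Type*} [Fintype E] [DecidableEq V] (ends : E → Sym2 V)

noncomputable def greedyScore : List V → V → ℝ
  | [] => 0
  | v :: l => greedyScore l +
      Pi.single v
        ((multigraphKappa ends (insert v l.toFinset) : ℝ) - multigraphKappa ends l.toFinset)

variable {ends}

lemma greedyScore_apply_of_notMem {l : List V} {v : V} (hv : v ∉ l) :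
    greedyScore ends l v = 0 := by
  induction l with
  | nil => rfl
  | cons w l ih =>
    rw [List.mem_cons, not_or] at hv
    simp [greedyScore, ih hv.2, hv.1]

variable [Fintype V] {x : V → ℝ}

lemma exists_greedyScore_chain_of_le (hx : x ∈ Set.extremePoints ℝ (scorePolytope ends))
    {k : ℕ} (hk : k ≤ #(univ.filter (x · ≠ 0))) :
    ∃ l : List V, l.Nodup ∧ l.length = k ∧ l.toFinset ⊆ univ.filter (x · ≠ 0) ∧
      IsTight ends x l.toFinset ∧ ∀ v ∈ l, x v = greedyScore ends l v := by
  induction k with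
  | zero => exact ⟨[], List.nodup_nil, rfl, by simp, isTight_empty, by simp⟩
  | succ k ih =>
    obtain ⟨l, hnd, hlen, hsub, hT, heq⟩ := ih (Nat.le_of_succ_le hk)
    have hssub : l.toFinset ⊂ univ.filter (x · ≠ 0) := ssubset_of_subset_of_ne hsub fun h => by
      rw [← h, List.toFinset_card_of_nodup hnd] at hk
      omega
    obtain ⟨u, hu, hul, hT'⟩ := exists_isTight_insert hx hT hssub
    rw [List.mem_toFinset] at hul
    refine ⟨u :: l, List.nodup_cons.2 ⟨hul, hnd⟩, by simp [hlen], ?_, by simpa using hT',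
      ?_⟩
    · simpa [insert_subset_iff] using ⟨hu, hsub⟩
    · intro v hv
      rcases List.mem_cons.1 hv with rfl | hvl
      · have hsum := hT'
        rw [IsTight, sum_insert (by simpa using hul), hT] at hsum
        simp [greedyScore, greedyScore_apply_of_notMem hul, ← hsum]
      · have hvu : v ≠ u := by rintro rfl; exact hul hvl
        simp [greedyScore, heq v hvl, hvu]

lemma exists_nodup_eq_greedyScore (hx : x ∈ Set.extremePoints ℝ (scorePolytope ends)) :
    ∃ l : List V, l.Nodup ∧ x = greedyScore ends l := by
  obtain ⟨l, hnd, hlen, hsub, -, heq⟩ := exists_greedyScore_chain_of_le hx le_rfl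
  have hl : l.toFinset = univ.filter (x · ≠ 0) :=
    eq_of_subset_of_card_le hsub (by rw [List.toFinset_card_of_nodup hnd, hlen])
  refine ⟨l, hnd, funext fun v => ?_⟩
  by_cases hv : v ∈ l
  · exact heq v hv
  · rw [greedyScore_apply_of_notMem hv]
    by_contra hxv
    exact hv (List.mem_toFinset.1 (hl ▸ mem_filter.2 ⟨mem_univ v, hxv⟩))

end Greedy

lemma sum_range_descFactorial_eq_sum_factorial_div (n : ℕ) :
    ∑ k ∈ range (n + 1), n.descFactorial k =
      ∑ i ∈ range (n + 1), n.factorial / i.factorial := by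
  rw [← sum_range_reflect]
  refine sum_congr rfl fun i hi => ?_
  have hin : i ≤ n := Nat.lt_succ_iff.1 (mem_range.1 hi)
  rw [show n + 1 - 1 - i = n - i by omega, Nat.descFactorial_eq_div (Nat.sub_le n i),
    Nat.sub_sub_self hin]

lemma card_sigma_fin_embedding (m : ℕ) (V : Type*) [Fintype V] :
    Nat.card (Σ k : Fin (m + 1), Fin k ↪ V) =
      ∑ k ∈ range (m + 1), (Fintype.card V).descFactorial k := by
  rw [Nat.card_eq_fintype_card, Fintype.card_sigma, ← Fin.sum_univ_eq_sum_range]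
  simp [Fintype.card_embedding_eq]

/-- The score vector polytope of a multigraph with `n` vertices has finitely
many extreme points, at most `∑_{i=0}^{n} n!/i! = ⌊e·n!⌋` of them. -/
theorem card_extremePoints_scorePolytope_le
    {V E : Type*} [Fintype V] [Fintype E] [DecidableEq V]
    (ends : E → Sym2 V) :
    (Set.extremePoints ℝ (scorePolytope ends)).Finite ∧
      (Set.extremePoints ℝ (scorePolytope ends)).ncard ≤
        ∑ i ∈ Finset.range (Fintype.card V + 1),
          (Fintype.card V).factorial / i.factorial := by
  set n := Fintype.card V
  let score (t : Σ k : Fin (n + 1), Fin k ↪ V) : V → ℝ := greedyScore ends (List.ofFn t.2)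
  have hsub : Set.extremePoints ℝ (scorePolytope ends) ⊆ Set.range score := by
    intro x hx
    obtain ⟨l, hnd, rfl⟩ := exists_nodup_eq_greedyScore hx
    exact ⟨⟨⟨l.length, Nat.lt_succ_of_le hnd.length_le_card⟩,
      ⟨l.get, List.nodup_iff_injective_get.1 hnd⟩⟩, by simp [score, List.ofFn_get]⟩
  refine ⟨(Set.finite_range score).subset hsub, ?_⟩
  calc _ ≤ (Set.range score).ncard := Set.ncard_le_ncard hsub (Set.finite_range score)
    _ ≤ Nat.card (Σ k : Fin (n + 1), Fin k ↪ V) :=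
      Finite.card_range_le score
    _ = _ := by
      rw [card_sigma_fin_embedding, sum_range_descFactorial_eq_sum_factorial_div]
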